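/- arXiv:2209.14213 — 4 statements merged into one kernel-verified Lean document; each statement's English description precedes it below -/
import Mathlib

section
/- Let G be a regular subgroup of S_n admitting an abelian decomposition G = AB with A, B abelian subgroups, let σ : G → C_{S_n}(G) be the standard anti-isomorphism (with respect to some i₀), and set B₁ = σ(B). Then the subgroup K = ⟨A, B₁⟩ of S_n is abelian, has order n, and acts regularly on {1,...,n}. -/
/-!
Since σ takes values in the centralizer of `G`, the permutations `σ b` commute with `A ≤ G`, and
since σ reverses products, `σ(B)` is abelian along with `B`. So `K = ⟨A, σ(B)⟩` is generated by
pairwise commuting permutations and is abelian. As `σ b i₀ = b i₀`, each point `g i₀ = a (b i₀)`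
is `(a * σ b) i₀`, so `K` is transitive. A transitive abelian permutation group is regular: if
`k x = k' x`, then `k` and `k'` agree on every `c x` with `c ∈ K`, because they commute with `c`.
-/

namespace Equiv.Perm

variable {α : Type*}

theorem exists_mem_apply_eq_of_forall_exists_mem_apply_eq {K : Subgroup (Perm α)} {x : α}
    (htrans : ∀ j, ∃ k ∈ K, k x = j) (i j : α) : ∃ k ∈ K, k i = j := by
  obtain ⟨c, hc, rfl⟩ := htrans i
  obtain ⟨d, hd, rfl⟩ := htrans j
  exact ⟨d * c⁻¹, mul_mem hd (inv_mem hc), by simp⟩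

theorem eq_of_apply_eq_of_isMulCommutative {K : Subgroup (Perm α)} [IsMulCommutative K] {x : α}
    (htrans : ∀ j, ∃ k ∈ K, k x = j) {k k' : Perm α} (hk : k ∈ K) (hk' : k' ∈ K)
    (h : k x = k' x) : k = k' := by
  ext p
  obtain ⟨c, hc, rfl⟩ := htrans p
  calc k (c x) = c (k x) := by rw [← mul_apply, setLike_mul_comm hk hc, mul_apply]
    _ = c (k' x) := by rw [h]
    _ = k' (c x) := by rw [← mul_apply, setLike_mul_comm hc hk', mul_apply]

theorem bijective_apply_of_isMulCommutative {K : Subgroup (Perm α)} [IsMulCommutative K] {x : α}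
    (htrans : ∀ j, ∃ k ∈ K, k x = j) : Function.Bijective fun k : K => (k : Perm α) x :=
  ⟨fun k k' h => Subtype.ext (eq_of_apply_eq_of_isMulCommutative htrans k.2 k'.2 h),
    fun j => let ⟨k, hk, hkj⟩ := htrans j; ⟨⟨k, hk⟩, hkj⟩⟩

end Equiv.Perm

namespace Subgroup

variable {M : Type*} [Group M]

theorem mul_comm_of_mem_union_image_of_antiHom {G A B : Subgroup M} (hA : A ≤ G)
    (hAab : ∀ a ∈ A, ∀ a' ∈ A, a * a' = a' * a) (hBab : ∀ b ∈ B, ∀ b' ∈ B, b * b' = b' * b)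
    {σ : G → M} (hσcent : ∀ g, σ g ∈ centralizer (G : Set M))
    (hσanti : ∀ g h : G, σ (g * h) = σ h * σ g) :
    ∀ x ∈ (A : Set M) ∪ σ '' {g : G | (g : M) ∈ B},
      ∀ y ∈ (A : Set M) ∪ σ '' {g : G | (g : M) ∈ B}, x * y = y * x := by
  have hσB (g h : G) (hg : (g : M) ∈ B) (hh : (h : M) ∈ B) : σ g * σ h = σ h * σ g := by
    have hhg : h * g = g * h := Subtype.ext (hBab _ hh _ hg)
    rw [← hσanti, ← hσanti, hhg]
  rintro x (hx | ⟨g, hg, rfl⟩) y (hy | ⟨h, hh, rfl⟩)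
  · exact hAab x hx y hy
  · exact hσcent h x (hA hx)
  · exact (hσcent g y (hA hy)).symm
  · exact hσB g h hg hh

end Subgroup

open Equiv.Perm Subgroup in
theorem abelian_decomposition_gives_abelian_regular_subgroup_general
    {n : ℕ} (G : Subgroup (Equiv.Perm (Fin n)))
    (htrans : ∀ i j : Fin n, ∃ g ∈ G, g i = j)
    (A B : Subgroup (Equiv.Perm (Fin n))) (hA : A ≤ G) (hB : B ≤ G)
    (hAab : ∀ a ∈ A, ∀ a' ∈ A, a * a' = a' * a)
    (hBab : ∀ b ∈ B, ∀ b' ∈ B, b * b' = b' * b)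
    (hdec : ∀ g ∈ G, ∃ a ∈ A, ∃ b ∈ B, g = a * b)
    (i₀ : Fin n)
    (σ : G → Equiv.Perm (Fin n))
    (hσ : ∀ (h : G) (i : Fin n), ∀ g : G, (g : Equiv.Perm (Fin n)) i₀ = i →
      σ h i = (g : Equiv.Perm (Fin n)) ((h : Equiv.Perm (Fin n)) i₀))
    (hσanti : ∀ g h : G, σ (g * h) = σ h * σ g)
    (hσbij : Function.Injective σ ∧
      Set.range σ = (Subgroup.centralizer (G : Set (Equiv.Perm (Fin n))) :
        Set (Equiv.Perm (Fin n)))) :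
    ∀ K : Subgroup (Equiv.Perm (Fin n)),
      K = Subgroup.closure ((A : Set (Equiv.Perm (Fin n))) ∪
            (σ '' {g : G | (g : Equiv.Perm (Fin n)) ∈ B})) →
      ((∀ x ∈ K, ∀ y ∈ K, x * y = y * x) ∧
        Nat.card K = n ∧
        ∀ i j : Fin n, ∃! k : K, (k : Equiv.Perm (Fin n)) i = j) := by
  intro K hK
  have hσcent (h : G) : σ h ∈ centralizer (G : Set (Equiv.Perm (Fin n))) := by
    rw [← SetLike.mem_coe, ← hσbij.2]; exact Set.mem_range_self h
  have : IsMulCommutative K := hK ▸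
    isMulCommutative_closure (mul_comm_of_mem_union_image_of_antiHom hA hAab hBab hσcent hσanti)
  have htransK (j : Fin n) : ∃ k ∈ K, k i₀ = j := by
    obtain ⟨g, hg, rfl⟩ := htrans i₀ j
    obtain ⟨a, ha, b, hb, rfl⟩ := hdec g hg
    refine ⟨a * σ ⟨b, hB hb⟩, hK ▸ mul_mem (subset_closure (.inl ha))
      (subset_closure (.inr ⟨_, hb, rfl⟩)), ?_⟩
    simp [mul_apply, hσ ⟨b, hB hb⟩ i₀ 1 rfl]
  refine ⟨fun x hx y hy => setLike_mul_comm hx hy, ?_, fun i j => ?_⟩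
  · rw [Nat.card_eq_of_bijective _ (bijective_apply_of_isMulCommutative htransK),
      Nat.card_eq_fintype_card, Fintype.card_fin]
  · exact (bijective_apply_of_isMulCommutative
      (exists_mem_apply_eq_of_forall_exists_mem_apply_eq htransK i)).existsUnique j

/-- If `G` is a regular subgroup of `S_n` with an abelian decomposition
`G = AB`, and `σ : G → C_{S_n}(G)` is the standard anti-isomorphism with `B₁ = σ(B)`,
then `K = ⟨A, B₁⟩` is abelian of order `n` and acts regularly (simply transitively)
on `{1,...,n}`. -/
theorem abelian_decomposition_gives_abelian_regular_subgroup
    {n : ℕ} (G : Subgroup (Equiv.Perm (Fin n)))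
    (hcard : Nat.card G = n)
    (htrans : ∀ i j : Fin n, ∃ g ∈ G, g i = j)
    (A B : Subgroup (Equiv.Perm (Fin n))) (hA : A ≤ G) (hB : B ≤ G)
    (hAab : ∀ a ∈ A, ∀ a' ∈ A, a * a' = a' * a)
    (hBab : ∀ b ∈ B, ∀ b' ∈ B, b * b' = b' * b)
    (hdec : ∀ g ∈ G, ∃ a ∈ A, ∃ b ∈ B, g = a * b)
    (i₀ : Fin n)
    (σ : G → Equiv.Perm (Fin n))
    (hσ : ∀ (h : G) (i : Fin n), ∀ g : G, (g : Equiv.Perm (Fin n)) i₀ = i →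
      σ h i = (g : Equiv.Perm (Fin n)) ((h : Equiv.Perm (Fin n)) i₀))
    (hσanti : ∀ g h : G, σ (g * h) = σ h * σ g)
    (hσbij : Function.Injective σ ∧
      Set.range σ = (Subgroup.centralizer (G : Set (Equiv.Perm (Fin n))) :
        Set (Equiv.Perm (Fin n)))) :
    ∀ K : Subgroup (Equiv.Perm (Fin n)),
      K = Subgroup.closure ((A : Set (Equiv.Perm (Fin n))) ∪
            (σ '' {g : G | (g : Equiv.Perm (Fin n)) ∈ B})) →
      ((∀ x ∈ K, ∀ y ∈ K, x * y = y * x) ∧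
        Nat.card K = n ∧
        ∀ i j : Fin n, ∃! k : K, (k : Equiv.Perm (Fin n)) i = j) :=
  abelian_decomposition_gives_abelian_regular_subgroup_general G htrans A B hA hB hAab hBab hdec i₀
    σ hσ hσanti hσbij
end

section
/- Let G be a finite group of order n, N ⊴ G a normal subgroup, and I a (two-sided) ideal of the group algebra F_q[G] on which N acts trivially from the left (n·x = x for all n ∈ N, x ∈ I). Let H be any finite group of order n with a normal subgroup K ⊴ H such that G/N ≅ H/K. Then there is a bijection φ : G → H whose F_q-linear extension maps I onto a two-sided ideal of F_q[H]. -/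
/-!
Writing `x = ∑ x_g g`, the condition `m · x = x` for `m ∈ N` says `x_{mg} = x_g`, so every element
of `I` is constant on the cosets of `N`. Since `|N| = |K|`, the isomorphism `G/N ≅ H/K` lifts to a
bijection `φ : G → H` mapping each coset of `N` onto the corresponding coset of `K`. Modulo `N`
the map `φ⁻¹` is multiplicative, and the coefficients of elements of `I` only see their cosets,
so `h · φ(x) = φ(φ⁻¹(h) · x)` and `φ(x) · h = φ(x · φ⁻¹(h))` for `x ∈ I`: the image `φ(I)` is
stable under multiplication by group elements on either side, hence a two-sided ideal.
-/

open MonoidAlgebra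

theorem Subgroup.exists_equiv_mk_eq {G H : Type*} [Group G] [Group H] [Finite G] [Finite H]
    (hcard : Nat.card G = Nat.card H) (s : Subgroup G) (t : Subgroup H) (e : G ⧸ s ≃ H ⧸ t) :
    ∃ φ : G ≃ H, ∀ g, (φ g : H ⧸ t) = e g := by
  have hst : Nat.card s = Nat.card t := by
    have h := s.card_mul_index.trans (hcard.trans t.card_mul_index.symm)
    rw [Subgroup.index, Subgroup.index, Nat.card_congr e] at h
    exact Nat.eq_of_mul_eq_mul_right Nat.card_pos h
  obtain ⟨f⟩ := Finite.card_eq.mp hst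
  refine ⟨groupEquivQuotientProdSubgroup.trans
    ((e.prodCongr f).trans groupEquivQuotientProdSubgroup.symm), fun g => ?_⟩
  exact congrArg Prod.fst (Equiv.apply_symm_apply groupEquivQuotientProdSubgroup _)

namespace MonoidAlgebra

variable {k G H : Type*}

theorem coe_mapDomainLinearEquiv [Semiring k] [Mul G] [Mul H] (φ : G ≃ H) :
    ⇑(mapDomainLinearEquiv k k φ) = mapDomainAddEquiv k φ :=
  funext fun x => by ext; simp

theorem mul_mem_of_forall_of_mul_mem [Semiring k] [Monoid G] {J : Submodule k k[G]}
    (hJ : ∀ g, ∀ y ∈ J, of k G g * y ∈ J) (a : k[G]) {y : k[G]} (hy : y ∈ J) : a * y ∈ J := by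
  induction a using MonoidAlgebra.induction_on with
  | of g => exact hJ g y hy
  | add a b ha hb => rw [add_mul]; exact J.add_mem ha hb
  | smul r a ha => rw [smul_mul_assoc]; exact J.smul_mem r ha

theorem mul_mem_of_forall_mul_of_mem [CommSemiring k] [Monoid G] {J : Submodule k k[G]}
    (hJ : ∀ g, ∀ y ∈ J, y * of k G g ∈ J) (a : k[G]) {y : k[G]} (hy : y ∈ J) : y * a ∈ J := by
  induction a using MonoidAlgebra.induction_on with
  | of g => exact hJ g y hy
  | add a b ha hb => rw [mul_add]; exact J.add_mem ha hb
  | smul r a ha => rw [mul_smul_comm]; exact J.smul_mem r ha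

section Group

variable [Semiring k] [Group G] [Group H]

theorem coeff_eq_of_mk_eq {N : Subgroup G} [N.Normal] {x : k[G]}
    (hx : ∀ m ∈ N, of k G m * x = x) {g g' : G} (hg : (g : G ⧸ N) = g') :
    x.coeff g = x.coeff g' := by
  have hm : g' * g⁻¹ ∈ N := by
    simpa [mul_assoc] using ‹N.Normal›.conj_mem _ (QuotientGroup.eq.mp hg) g
  have h := congrArg (·.coeff g') (hx _ hm)
  simp only [of_apply, coeff_single_mul_apply, one_mul, mul_inv_rev, inv_inv] at h
  rwa [inv_mul_cancel_right] at h

variable {N : Subgroup G} [N.Normal] {K : Subgroup H} [K.Normal] {e : G ⧸ N ≃* H ⧸ K}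
  {φ : G ≃ H} (hφ : ∀ g, (φ g : H ⧸ K) = e g)
include hφ

theorem mk_symm_apply_of_mk_apply (h : H) : (φ.symm h : G ⧸ N) = e.symm h := by
  rw [MulEquiv.eq_symm_apply, ← hφ, Equiv.apply_symm_apply]

theorem of_mul_mapDomainAddEquiv {x : k[G]} (hx : ∀ m ∈ N, of k G m * x = x) (h : H) :
    of k H h * mapDomainAddEquiv k φ x = mapDomainAddEquiv k φ (of k G (φ.symm h) * x) := by
  ext h'
  simp only [of_apply, coeff_single_mul_apply, one_mul, coeff_mapDomainAddEquiv,
    Finsupp.equivMapDomain_apply]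
  refine coeff_eq_of_mk_eq hx ?_
  simp only [mk_symm_apply_of_mk_apply hφ, QuotientGroup.mk_mul, QuotientGroup.mk_inv, map_mul,
    map_inv]

theorem mapDomainAddEquiv_mul_of {x : k[G]} (hx : ∀ m ∈ N, of k G m * x = x) (h : H) :
    mapDomainAddEquiv k φ x * of k H h = mapDomainAddEquiv k φ (x * of k G (φ.symm h)) := by
  ext h'
  simp only [of_apply, coeff_mul_single_apply, mul_one, coeff_mapDomainAddEquiv,
    Finsupp.equivMapDomain_apply]
  refine coeff_eq_of_mk_eq hx ?_
  simp only [mk_symm_apply_of_mk_apply hφ, QuotientGroup.mk_mul, QuotientGroup.mk_inv, map_mul,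
    map_inv]

end Group

end MonoidAlgebra

theorem ideal_permutation_equivalent_of_isomorphic_quotients_general
    {F : Type*} [Field F]
    {G H : Type*} [Group G] [Fintype G] [Group H] [Fintype H]
    {n : ℕ} (hG : Nat.card G = n) (hH : Nat.card H = n)
    (N : Subgroup G) [N.Normal] (K : Subgroup H) [K.Normal]
    (iso : (G ⧸ N) ≃* (H ⧸ K))
    (I : Submodule F (MonoidAlgebra F G))
    (hIl : ∀ a : MonoidAlgebra F G, ∀ x ∈ I, a * x ∈ I)
    (hIr : ∀ a : MonoidAlgebra F G, ∀ x ∈ I, x * a ∈ I)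
    (htriv : ∀ m ∈ N, ∀ x ∈ I, MonoidAlgebra.of F G m * x = x) :
    ∃ φ : G ≃ H, ∃ J : Submodule F (MonoidAlgebra F H),
      (∀ a : MonoidAlgebra F H, ∀ y ∈ J, a * y ∈ J) ∧
      (∀ a : MonoidAlgebra F H, ∀ y ∈ J, y * a ∈ J) ∧
      (MonoidAlgebra.mapDomainAddEquiv F φ '' (I : Set (MonoidAlgebra F G)) =
        (J : Set (MonoidAlgebra F H))) := by
  obtain ⟨φ, hφ⟩ := Subgroup.exists_equiv_mk_eq (hG.trans hH.symm) N K iso.toEquiv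
  set Φ := mapDomainAddEquiv F φ
  obtain ⟨J, hJ⟩ : ∃ J : Submodule F F[H], (J : Set F[H]) = Φ '' I := by
    refine ⟨I.map (mapDomainLinearEquiv F F φ : F[G] →ₗ[F] F[H]), ?_⟩
    rw [Submodule.map_coe, LinearEquiv.coe_coe, coe_mapDomainLinearEquiv]
  have mem_J {y : F[H]} : y ∈ J ↔ ∃ x ∈ I, Φ x = y := by rw [← SetLike.mem_coe, hJ]; rfl
  refine ⟨φ, J, fun a y hy => mul_mem_of_forall_of_mul_mem ?_ a hy,
    fun a y hy => mul_mem_of_forall_mul_of_mem ?_ a hy, hJ.symm⟩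
  · intro h y hy
    obtain ⟨x, hx, rfl⟩ := mem_J.mp hy
    rw [of_mul_mapDomainAddEquiv hφ (htriv · · x hx)]
    exact mem_J.mpr ⟨_, hIl _ x hx, rfl⟩
  · intro h y hy
    obtain ⟨x, hx, rfl⟩ := mem_J.mp hy
    rw [mapDomainAddEquiv_mul_of hφ (htriv · · x hx)]
    exact mem_J.mpr ⟨_, hIr _ x hx, rfl⟩

/-- Let `G` be a finite group of order `n`, `N ⊴ G`, and `I` a two-sided
ideal of `F[G]` on which `N` acts trivially from the left. If `H` is a finite group of
order `n` with `K ⊴ H` and `G/N ≅ H/K`, then there is a bijection `φ : G → H` whose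
`F`-linear extension maps `I` onto a two-sided ideal of `F[H]`. -/
theorem ideal_permutation_equivalent_of_isomorphic_quotients
    {F : Type*} [Field F] [Fintype F]
    {G H : Type*} [Group G] [Fintype G] [Group H] [Fintype H]
    {n : ℕ} (hG : Nat.card G = n) (hH : Nat.card H = n)
    (N : Subgroup G) [N.Normal] (K : Subgroup H) [K.Normal]
    (iso : (G ⧸ N) ≃* (H ⧸ K))
    (I : Submodule F (MonoidAlgebra F G))
    (hIl : ∀ a : MonoidAlgebra F G, ∀ x ∈ I, a * x ∈ I)
    (hIr : ∀ a : MonoidAlgebra F G, ∀ x ∈ I, x * a ∈ I)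
    (htriv : ∀ m ∈ N, ∀ x ∈ I, MonoidAlgebra.of F G m * x = x) :
    ∃ φ : G ≃ H, ∃ J : Submodule F (MonoidAlgebra F H),
      (∀ a : MonoidAlgebra F H, ∀ y ∈ J, a * y ∈ J) ∧
      (∀ a : MonoidAlgebra F H, ∀ y ∈ J, y * a ∈ J) ∧
      (MonoidAlgebra.mapDomainAddEquiv F φ '' (I : Set (MonoidAlgebra F G)) =
        (J : Set (MonoidAlgebra F H))) :=
  ideal_permutation_equivalent_of_isomorphic_quotients_general hG hH N K iso I hIl hIr htriv
end

section
/- Let s, t > 1 be integers and C = ⊕_{i=1}^s Rep_t(F_q) ≤ F_q^{st}, the code of vectors constant on each of the s consecutive blocks of length t. Then every permutation π ∈ S_{st} with π(C) = C permutes the s blocks, i.e., there exists σ_π ∈ S_s such that π maps the index set of block i bijectively onto the index set of block σ_π(i), for each i ∈ {1,...,s}. -/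
/-- For `s, t > 1` and `C = ⊕_{i=1}^s Rep_t(F)` (vectors indexed by
`Fin s × Fin t` constant on each block `{i} × Fin t`), every permutation automorphism
`π` of `C` permutes the `s` blocks: there exists `σ_π ∈ S_s` with
`(π (i, j)).1 = σ_π i` for all `i, j`. -/
theorem permutation_automorphism_permutes_blocks
    {F : Type} [Field F] [Fintype F]
    {s t : ℕ} (hs : 1 < s) (ht : 1 < t)
    (C : Set (Fin s × Fin t → F))
    (hC : C = {v : Fin s × Fin t → F | ∀ (i : Fin s) (j j' : Fin t), v (i, j) = v (i, j')})
    (π : Equiv.Perm (Fin s × Fin t))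
    (hπ : (fun v : Fin s × Fin t → F => fun k => v (π⁻¹ k)) '' C = C) :
    ∃ σ : Equiv.Perm (Fin s), ∀ (i : Fin s) (j : Fin t), (π (i, j)).1 = σ i := by
  subst hC
  -- forward: composing a constant-on-blocks w with π stays constant-on-blocks
  have h1 : ∀ w : Fin s × Fin t → F, (∀ i j j', w (i,j) = w (i,j')) →
      ∀ (i : Fin s) (j j' : Fin t), w (π (i,j)) = w (π (i,j')) := by
    intro w hw i j j'
    have hwmem : w ∈ (fun v : Fin s × Fin t → F => fun k => v (π⁻¹ k)) ''
        {v : Fin s × Fin t → F | ∀ i j j', v (i,j) = v (i,j')} := by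
      rw [hπ]; exact hw
    obtain ⟨v, hv, hveq⟩ := hwmem
    have hv' : ∀ m, v m = w (π m) := by
      intro m
      have := congrFun hveq (π m)
      simpa using this
    rw [← hv' (i,j), ← hv' (i,j')]
    exact hv i j j'
  have h2 : ∀ w : Fin s × Fin t → F, (∀ i j j', w (i,j) = w (i,j')) →
      ∀ (i : Fin s) (j j' : Fin t), w (π⁻¹ (i,j)) = w (π⁻¹ (i,j')) := by
    intro w hw i j j'
    have : (fun k => w (π⁻¹ k)) ∈ {v : Fin s × Fin t → F | ∀ i j j', v (i,j) = v (i,j')} := by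
      rw [← hπ]; exact ⟨w, hw, rfl⟩
    exact this i j j'
  -- key: a map preserving constancy sends blocks into blocks
  have key : ∀ (ρ : Equiv.Perm (Fin s × Fin t)),
      (∀ w : Fin s × Fin t → F, (∀ i j j', w (i,j) = w (i,j')) →
        ∀ (i : Fin s) (j j' : Fin t), w (ρ (i,j)) = w (ρ (i,j'))) →
      ∀ (i : Fin s) (j j' : Fin t), (ρ (i,j)).1 = (ρ (i,j')).1 := by
    intro ρ h i j j'
    by_contra hne
    have hw := h (fun k => if k.1 = (ρ (i,j)).1 then (1:F) else 0)
      (fun a b b' => rfl) i j j'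
    simp only [if_pos rfl, Ne.symm hne, if_neg (Ne.symm hne)] at hw
    exact one_ne_zero hw
  have hf := key π h1
  have hg := key π⁻¹ h2
  have ht0 : 0 < t := by omega
  set j0 : Fin t := ⟨0, ht0⟩ with hj0
  set f : Fin s → Fin s := fun i => (π (i, j0)).1 with hfdef
  set g : Fin s → Fin s := fun i => (π⁻¹ (i, j0)).1 with hgdef
  have hleft : Function.LeftInverse g f := by
    intro i
    have h1' : (π⁻¹ (f i, j0)).1 = (π⁻¹ (f i, (π (i, j0)).2)).1 := hg (f i) j0 _
    have heq : ((f i : Fin s), (π (i, j0)).2) = π (i, j0) := by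
      simp [hfdef]
    calc g (f i) = (π⁻¹ (f i, (π (i, j0)).2)).1 := h1'
      _ = (π⁻¹ (π (i, j0))).1 := by rw [heq]
      _ = i := by simp
  have hright : Function.RightInverse g f := by
    intro i
    have h1' : (π (g i, j0)).1 = (π (g i, (π⁻¹ (i, j0)).2)).1 := hf (g i) j0 _
    have heq : ((g i : Fin s), (π⁻¹ (i, j0)).2) = π⁻¹ (i, j0) := by
      simp [hgdef]
    calc f (g i) = (π (g i, (π⁻¹ (i, j0)).2)).1 := h1'
      _ = (π (π⁻¹ (i, j0))).1 := by rw [heq]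
      _ = i := by simp
  refine ⟨⟨f, g, hleft, hright⟩, fun i j => ?_⟩
  exact hf i j j0
end

section
/- Let G be a regular subgroup of S_n admitting a coprime cyclic decomposition G = AB, where A and B are cyclic subgroups of coprime orders, and let σ : G → C_{S_n}(G) be the standard anti-isomorphism (with respect to some i₀) with B₁ = σ(B). Then K = ⟨A, B₁⟩ is a cyclic subgroup of S_n of order n acting regularly on {1,...,n}. -/
/-!
Since `σ` takes values in the centralizer of `G`, the subgroups `A` and `B₁ = σ(B) ≅ B` commute
elementwise, so `K = A ⊔ B₁` is the image of `A × B₁`, which is cyclic because the orders are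
coprime. Each of `G` and `K` contains subgroups of coprime orders `|A|` and `|B|` and lies in
their product set (`G = AB`, `K = AB₁`), which pins its order to `|A||B|`; hence `|K| = |G| = n`. Finally `K` is transitive (`ab` and `aσ(b)`
agree at `i₀`), and a transitive group of degree `n` and order `n` acts regularly.
-/

open Pointwise

section AntiHom

variable {G M : Type*} [Group G] [Group M]

def invCompOfAntiMul (σ : G → M) (hσ : ∀ g h, σ (g * h) = σ h * σ g) : G →* M :=
  MonoidHom.mk' (fun g => σ g⁻¹) fun g h => by simp only [mul_inv_rev, hσ]

variable (σ : G → M) (hσ : ∀ g h, σ (g * h) = σ h * σ g)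

@[simp]
theorem invCompOfAntiMul_apply (g : G) : invCompOfAntiMul σ hσ g = σ g⁻¹ := rfl

theorem invCompOfAntiMul_injective (hinj : Function.Injective σ) :
    Function.Injective (invCompOfAntiMul σ hσ) :=
  fun _ _ h => inv_injective (hinj h)

theorem image_eq_coe_map_invCompOfAntiMul (H : Subgroup G) :
    σ '' H = H.map (invCompOfAntiMul σ hσ) := by
  ext m
  constructor
  · rintro ⟨g, hg, rfl⟩
    exact ⟨g⁻¹, H.inv_mem hg, by simp⟩
  · rintro ⟨g, hg, rfl⟩
    exact ⟨g⁻¹, H.inv_mem hg, rfl⟩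

end AntiHom

namespace Subgroup

variable {M : Type*} [Group M] {H L : Subgroup M}

theorem range_noncommCoprod_subtype (hcomm : ∀ h : H, ∀ l : L, Commute (h : M) l) :
    (MonoidHom.noncommCoprod H.subtype L.subtype hcomm).range = H ⊔ L := by
  simpa only [range_subtype] using MonoidHom.noncommCoprod_range H.subtype L.subtype hcomm

theorem coe_sup_subset_mul_of_commute (hcomm : ∀ h : H, ∀ l : L, Commute (h : M) l) :
    ((H ⊔ L : Subgroup M) : Set M) ⊆ (H : Set M) * (L : Set M) := by
  rw [← range_noncommCoprod_subtype hcomm]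
  rintro - ⟨⟨h, l⟩, rfl⟩
  exact Set.mul_mem_mul h.2 l.2

theorem isCyclic_sup_of_commute [IsCyclic H] [IsCyclic L]
    (hcop : (Nat.card H).Coprime (Nat.card L)) (hcomm : ∀ h : H, ∀ l : L, Commute (h : M) l) :
    IsCyclic ↥(H ⊔ L) := by
  have : IsCyclic (H × L) := Group.isCyclic_prod_iff.mpr ⟨inferInstance, inferInstance, hcop⟩
  rw [← range_noncommCoprod_subtype hcomm]
  exact isCyclic_of_surjective _ (MonoidHom.rangeRestrict_surjective _)

theorem card_eq_mul_of_coprime_of_subset_mul [Finite M] {K : Subgroup M} (hH : H ≤ K)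
    (hL : L ≤ K) (hcop : (Nat.card H).Coprime (Nat.card L)) (hK : (K : Set M) ⊆ (H : Set M) * (L : Set M)) :
    Nat.card K = Nat.card H * Nat.card L := by
  refine le_antisymm ?_ (Nat.le_of_dvd Nat.card_pos ?_)
  · calc Nat.card K ≤ Nat.card ((H : Set M) * (L : Set M)) := Nat.card_mono (Set.toFinite _) hK
      _ ≤ Nat.card H * Nat.card L := Set.natCard_mul_le
  · exact hcop.mul_dvd_of_dvd_of_dvd (card_dvd_of_le hH) (card_dvd_of_le hL)

end Subgroup

namespace Equiv.Perm

variable {α : Type*} (K : Subgroup (Perm α))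

theorem existsUnique_apply_eq_of_card_eq [Finite α] (i₀ : α) (htrans : ∀ j, ∃ k ∈ K, k i₀ = j)
    (hcard : Nat.card K = Nat.card α) (i j : α) : ∃! k : K, (k : Perm α) i = j := by
  have hsurj : Function.Surjective (fun k : K => (k : Perm α) i) := fun j => by
    obtain ⟨k₁, hk₁, rfl⟩ := htrans i
    obtain ⟨k₂, hk₂, rfl⟩ := htrans j
    exact ⟨⟨k₂ * k₁⁻¹, K.mul_mem hk₂ (K.inv_mem hk₁)⟩, by simp⟩
  exact ((Nat.bijective_iff_surjective_and_card _).mpr ⟨hsurj, hcard⟩).existsUnique j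

end Equiv.Perm

/-- If `G` is a regular subgroup of `S_n` with a coprime cyclic
decomposition `G = AB`, and `σ : G → C_{S_n}(G)` is the standard anti-isomorphism with
`B₁ = σ(B)`, then `K = ⟨A, B₁⟩` is a cyclic subgroup of `S_n` of order `n` acting
regularly on the points. -/
theorem coprime_cyclic_decomposition_gives_cyclic_regular_subgroup
    {n : ℕ} (G : Subgroup (Equiv.Perm (Fin n)))
    (hcard : Nat.card G = n)
    (htrans : ∀ i j : Fin n, ∃ g ∈ G, g i = j)
    (A B : Subgroup (Equiv.Perm (Fin n))) (hA : A ≤ G) (hB : B ≤ G)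
    (hAcyc : IsCyclic A) (hBcyc : IsCyclic B)
    (hcop : Nat.Coprime (Nat.card A) (Nat.card B))
    (hdec : ∀ g ∈ G, ∃ a ∈ A, ∃ b ∈ B, g = a * b)
    (i₀ : Fin n)
    (σ : G → Equiv.Perm (Fin n))
    (hσ : ∀ (h : G) (i : Fin n), ∀ g : G, (g : Equiv.Perm (Fin n)) i₀ = i →
      σ h i = (g : Equiv.Perm (Fin n)) ((h : Equiv.Perm (Fin n)) i₀))
    (hσanti : ∀ g h : G, σ (g * h) = σ h * σ g)
    (hσbij : Function.Injective σ ∧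
      Set.range σ = (Subgroup.centralizer (G : Set (Equiv.Perm (Fin n))) :
        Set (Equiv.Perm (Fin n)))) :
    ∀ K : Subgroup (Equiv.Perm (Fin n)),
      K = Subgroup.closure ((A : Set (Equiv.Perm (Fin n))) ∪
            (σ '' {g : G | (g : Equiv.Perm (Fin n)) ∈ B})) →
      (IsCyclic K ∧
        Nat.card K = n ∧
        ∀ i j : Fin n, ∃! k : K, (k : Equiv.Perm (Fin n)) i = j) := by
  intro K hK
  obtain ⟨hσinj, hσrange⟩ := hσbij
  set φ := invCompOfAntiMul σ hσanti
  set B₁ := (B.subgroupOf G).map φ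
  have hσB : σ '' {g : G | (g : Equiv.Perm (Fin n)) ∈ B} = B₁ :=
    image_eq_coe_map_invCompOfAntiMul σ hσanti (B.subgroupOf G)
  rw [hσB, Subgroup.closure_union, Subgroup.closure_eq, Subgroup.closure_eq] at hK
  subst hK
  have eB : B ≃* B₁ := (Subgroup.subgroupOfEquivOfLe hB).symm.trans
    ((B.subgroupOf G).equivMapOfInjective φ (invCompOfAntiMul_injective σ hσanti hσinj))
  have hB₁cyc : IsCyclic B₁ := eB.isCyclic.mp hBcyc
  have hB₁card : Nat.card B₁ = Nat.card B := (Nat.card_congr eB.toEquiv).symm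
  have hcop₁ : (Nat.card A).Coprime (Nat.card B₁) := hB₁card ▸ hcop
  have hcomm : ∀ (a : A) (b : B₁), Commute (a : Equiv.Perm (Fin n)) b := by
    rintro ⟨a, ha⟩ ⟨-, x, -, rfl⟩
    have hx : φ x ∈ (Subgroup.centralizer (G : Set (Equiv.Perm (Fin n))) : Set _) :=
      hσrange ▸ ⟨x⁻¹, rfl⟩
    exact Subgroup.mem_centralizer_iff.mp hx a (hA ha)
  have hGcard : Nat.card G = Nat.card A * Nat.card B :=
    Subgroup.card_eq_mul_of_coprime_of_subset_mul hA hB hcop fun g hg => by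
      obtain ⟨a, ha, b, hb, rfl⟩ := hdec g hg
      exact Set.mul_mem_mul ha hb
  have hKcard : Nat.card ↥(A ⊔ B₁) = n := by
    rw [Subgroup.card_eq_mul_of_coprime_of_subset_mul le_sup_left le_sup_right hcop₁
      (Subgroup.coe_sup_subset_mul_of_commute hcomm), hB₁card, ← hGcard, hcard]
  have hKtrans : ∀ j, ∃ k ∈ A ⊔ B₁, k i₀ = j := fun j => by
    obtain ⟨g, hg, rfl⟩ := htrans i₀ j
    obtain ⟨a, ha, b, hb, rfl⟩ := hdec g hg
    refine ⟨a * φ ⟨b, hB hb⟩⁻¹, mul_mem (Subgroup.mem_sup_left ha) (Subgroup.mem_sup_right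
      ⟨_, inv_mem (show ⟨b, hB hb⟩ ∈ B.subgroupOf G from hb), rfl⟩), ?_⟩
    simpa [φ] using hσ ⟨b, hB hb⟩ i₀ 1 rfl
  exact ⟨Subgroup.isCyclic_sup_of_commute hcop₁ hcomm, hKcard,
    Equiv.Perm.existsUnique_apply_eq_of_card_eq _ i₀ hKtrans (hKcard.trans (Nat.card_fin n).symm)⟩
end
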